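/- Let m ≥ 1 and let E, F ⊆ ℝ^m. The following are equivalent: (i) E is a conical limit set, F is closed in ℝ^m, E ⊆ F, and the interior of F is contained in the closure of E; (ii) there exists a sequence of points (t_n, v_n) in the upper half-space H with t_n → 0 as n → ∞ such that F equals the set of subsequential limits in ℝ^m of the sequence (v_n), and E equals the conical limit set of the set {(t_n, v_n) : n ∈ ℕ}. -/

import Mathlib

/-!
Write `limitSet A` for the set of `x` with `(0, x)` in the closure of `A ⊆ ℝ × V`. For a sequence
in the upper half-space with heights tending to `0`, its subsequential limits are exactly
`limitSet` of its range; this set is closed and contains the conical limit set. If a ball around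
`x` lies in it, one can hop through the sequence, each time halving the height and moving by at
most half of it; the hops converge conically, giving a conical limit point near `x`.

Conversely, given `E = Λc(E₀)` and `F`, take the points of `E₀` within `√t` of `E` (conical limit
set `E`, limit set inside `closure E`), the graph `t = d(v, F)²` over the complement of `F`
(limit set `⊇ F \ interior F`, no conical limit points since there `t = o(d(v, F))`), and a
sequence escaping to infinity. Replacing each of the first two by finite nets of its dyadic height
shells, of mesh a quarter of the height, keeps both limit sets and leaves finitely many points
above each height, so any enumeration of the union is the required sequence.
-/

open Filter Topology

/-- The open upper half-space over a normed space `V`: pairs `(t, v)` with `t > 0`. -/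
def upperHalf (V : Type*) [NormedAddCommGroup V] : Set (ℝ × V) := {p | 0 < p.1}

/-- The conical limit set of `E ⊆ ℝ × V`: points `x` for which there are `C > 0` and a
sequence `(t_n, v_n)` in `E` with `t_n → 0`, `v_n → x` and `‖v_n - x‖ ≤ C * t_n`. -/
def conicalLimitSet {V : Type*} [NormedAddCommGroup V] (E : Set (ℝ × V)) : Set V :=
  {x | ∃ C > 0, ∃ w : ℕ → ℝ × V, (∀ n, w n ∈ E) ∧
    Tendsto (fun n => (w n).1) atTop (𝓝 (0 : ℝ)) ∧
    Tendsto (fun n => (w n).2) atTop (𝓝 x) ∧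
    ∀ n, ‖(w n).2 - x‖ ≤ C * (w n).1}

/-- `X ⊆ V` is a conical limit set if it is the conical limit set of some subset of the
upper half-space. -/
def IsConicalLimitSet {V : Type*} [NormedAddCommGroup V] (X : Set V) : Prop :=
  ∃ E ⊆ upperHalf V, conicalLimitSet E = X


open Set Metric

section LimitSets

variable {V : Type*} [NormedAddCommGroup V]

def cone (x : V) (C : ℝ) : Set (ℝ × V) := {p | ‖p.2 - x‖ ≤ C * p.1}

def limitSet (A : Set (ℝ × V)) : Set V := {x | ((0 : ℝ), x) ∈ closure A}

theorem mem_conicalLimitSet_iff {S : Set (ℝ × V)} {x : V} :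
    x ∈ conicalLimitSet S ↔ ∃ C > 0, ((0 : ℝ), x) ∈ closure (S ∩ cone x C) := by
  refine ⟨fun ⟨C, hC, w, hwS, ht, hv, hcone⟩ => ⟨C, hC, ?_⟩, fun ⟨C, hC, h⟩ => ?_⟩
  · exact mem_closure_of_tendsto (ht.prodMk_nhds hv)
      (Eventually.of_forall fun n => ⟨hwS n, hcone n⟩)
  · obtain ⟨w, hw, hlim⟩ := mem_closure_iff_seq_limit.1 h
    exact ⟨C, hC, w, fun n => (hw n).1, hlim.fst_nhds, hlim.snd_nhds, fun n => (hw n).2⟩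

theorem conicalLimitSet_mono {S T : Set (ℝ × V)} (h : S ⊆ T) :
    conicalLimitSet S ⊆ conicalLimitSet T :=
  fun _ ⟨C, hC, w, hw, hrest⟩ => ⟨C, hC, w, fun n => h (hw n), hrest⟩

theorem conicalLimitSet_subset_limitSet (S : Set (ℝ × V)) : conicalLimitSet S ⊆ limitSet S :=
  fun _ hx => by
    obtain ⟨C, -, hC⟩ := mem_conicalLimitSet_iff.1 hx
    exact closure_mono inter_subset_left hC

theorem limitSet_mono {A B : Set (ℝ × V)} (h : A ⊆ B) : limitSet A ⊆ limitSet B :=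
  fun _ hx => closure_mono h hx

theorem isClosed_limitSet (A : Set (ℝ × V)) : IsClosed (limitSet A) :=
  isClosed_closure.preimage (continuous_const.prodMk continuous_id)

theorem limitSet_union (A B : Set (ℝ × V)) : limitSet (A ∪ B) = limitSet A ∪ limitSet B := by
  ext x
  simp only [limitSet, closure_union]
  rfl

theorem conicalLimitSet_union (A B : Set (ℝ × V)) :
    conicalLimitSet (A ∪ B) = conicalLimitSet A ∪ conicalLimitSet B := by
  ext x
  simp only [mem_union, mem_conicalLimitSet_iff, union_inter_distrib_right, closure_union]
  constructor
  · rintro ⟨C, hC, hA | hB⟩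
    exacts [Or.inl ⟨C, hC, hA⟩, Or.inr ⟨C, hC, hB⟩]
  · rintro (⟨C, hC, hA⟩ | ⟨C, hC, hB⟩)
    exacts [⟨C, hC, Or.inl hA⟩, ⟨C, hC, Or.inr hB⟩]

theorem limitSet_inter_of_isOpen {S U : Set (ℝ × V)} (hU : IsOpen U)
    (h0 : ∀ x : V, ((0 : ℝ), x) ∈ U) : limitSet (S ∩ U) = limitSet S := by
  refine (limitSet_mono inter_subset_left).antisymm fun x hx => ?_
  have := hU.inter_closure ⟨h0 x, hx⟩
  rwa [inter_comm] at this

theorem conicalLimitSet_inter_of_isOpen {S U : Set (ℝ × V)} (hU : IsOpen U)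
    (h0 : ∀ x : V, ((0 : ℝ), x) ∈ U) : conicalLimitSet (S ∩ U) = conicalLimitSet S := by
  refine (conicalLimitSet_mono inter_subset_left).antisymm fun x hx => ?_
  obtain ⟨C, hC, hx⟩ := mem_conicalLimitSet_iff.1 hx
  refine mem_conicalLimitSet_iff.2 ⟨C, hC, closure_mono ?_ (hU.inter_closure ⟨h0 x, hx⟩)⟩
  rintro p ⟨hpU, hpS, hpK⟩
  exact ⟨⟨hpS, hpU⟩, hpK⟩

theorem fst_lt_and_dist_snd_lt {x : V} {p : ℝ × V} {r : ℝ} (h : dist ((0 : ℝ), x) p < r) :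
    p.1 < r ∧ dist x p.2 < r := by
  rw [Prod.dist_eq, max_lt_iff, Real.dist_eq, zero_sub, abs_neg] at h
  exact ⟨(le_abs_self _).trans_lt h.1, h.2⟩

theorem mem_closure_of_forall_exists_dist_lt {T B : Set (ℝ × V)} {x : V}
    (hx : ((0 : ℝ), x) ∈ closure T) (h : ∀ p ∈ T, ∃ b ∈ B, dist p b < p.1) :
    ((0 : ℝ), x) ∈ closure B := by
  refine Metric.mem_closure_iff.2 fun ε hε => ?_
  obtain ⟨p, hpT, hp⟩ := Metric.mem_closure_iff.1 hx (ε / 2) (half_pos hε)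
  obtain ⟨b, hbB, hb⟩ := h p hpT
  exact ⟨b, hbB, by linarith [dist_triangle ((0 : ℝ), x) p b, (fst_lt_and_dist_snd_lt hp).1]⟩

theorem limitSet_eq_of_forall_exists_dist_lt {A T : Set (ℝ × V)} (hAT : A ⊆ T)
    (h : ∀ p ∈ T, ∃ a ∈ A, dist p a < p.1 / 2) : limitSet A = limitSet T := by
  refine (limitSet_mono hAT).antisymm fun x hx =>
    mem_closure_of_forall_exists_dist_lt hx fun p hp => ?_
  obtain ⟨a, ha, hpa⟩ := h p hp
  exact ⟨a, ha, by linarith [dist_nonneg (x := p) (y := a)]⟩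

theorem conicalLimitSet_eq_of_forall_exists_dist_lt {A T : Set (ℝ × V)} (hAT : A ⊆ T)
    (h : ∀ p ∈ T, ∃ a ∈ A, dist p a < p.1 / 2) : conicalLimitSet A = conicalLimitSet T := by
  refine (conicalLimitSet_mono hAT).antisymm fun x hx => ?_
  obtain ⟨C, hC, hx⟩ := mem_conicalLimitSet_iff.1 hx
  refine mem_conicalLimitSet_iff.2 ⟨2 * C + 1, by positivity,
    mem_closure_of_forall_exists_dist_lt hx ?_⟩
  rintro p ⟨hpT, hpK⟩
  obtain ⟨a, haA, hpa⟩ := h p hpT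
  obtain ⟨hfst, hsnd⟩ : |p.1 - a.1| < p.1 / 2 ∧ ‖p.2 - a.2‖ < p.1 / 2 := by
    rw [← Real.dist_eq, ← dist_eq_norm, ← max_lt_iff, ← Prod.dist_eq]
    exact hpa
  have htri : ‖a.2 - x‖ ≤ ‖p.2 - x‖ + ‖p.2 - a.2‖ := by
    simpa using norm_sub_le (p.2 - x) (p.2 - a.2)
  have hpK : ‖p.2 - x‖ ≤ C * p.1 := hpK
  refine ⟨a, ⟨haA, ?_⟩, by linarith [dist_nonneg (x := p) (y := a)]⟩
  show ‖a.2 - x‖ ≤ (2 * C + 1) * a.1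
  nlinarith [abs_lt.1 hfst]

end LimitSets

section Discretization

variable {V : Type*}

def IsHeightFinite (A : Set (ℝ × V)) : Prop := ∀ ε > 0, {p ∈ A | ε ≤ p.1}.Finite

theorem IsHeightFinite.union {A B : Set (ℝ × V)} (hA : IsHeightFinite A) (hB : IsHeightFinite B) :
    IsHeightFinite (A ∪ B) := fun ε hε => by
  refine ((hA ε hε).union (hB ε hε)).subset ?_
  rintro p ⟨hp | hp, hεp⟩
  exacts [Or.inl ⟨hp, hεp⟩, Or.inr ⟨hp, hεp⟩]

theorem isHeightFinite_range {s : ℕ → ℝ × V} (hs : Tendsto (fun n => (s n).1) atTop (𝓝 0)) :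
    IsHeightFinite (range s) := fun ε hε => by
  have hfin : {n | ε ≤ (s n).1}.Finite := by
    simpa [← Nat.cofinite_eq_atTop] using hs.eventually (gt_mem_nhds hε)
  refine (hfin.image s).subset ?_
  rintro _ ⟨⟨n, rfl⟩, hn⟩
  exact mem_image_of_mem s hn

variable [NormedAddCommGroup V] [ProperSpace V]

theorem exists_countable_isHeightFinite_net {T : Set (ℝ × V)}
    (hT : ∀ p ∈ T, 0 < p.1 ∧ ‖p‖ * p.1 < 1) :
    ∃ A ⊆ T, A.Countable ∧ IsHeightFinite A ∧ ∀ p ∈ T, ∃ a ∈ A, dist p a < p.1 / 2 := by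
  set R : ℕ → Set (ℝ × V) := fun j => {p ∈ T | 1 ≤ 2 ^ (j + 1) * p.1 ∧ 2 ^ j * p.1 ≤ 1}
  have hR : ∀ j, TotallyBounded (R j) := fun j => by
    refine (isCompact_closedBall (0 : ℝ × V) (2 ^ (j + 1))).totallyBounded.subset ?_
    rintro p ⟨hpT, hp, -⟩
    obtain ⟨hp1, hpn⟩ := hT p hpT
    rw [mem_closedBall, dist_zero_right]
    nlinarith
  choose N hNR hNfin hNcov using fun j =>
    finite_approx_of_totallyBounded (hR j) (1 / 2 ^ (j + 2)) (by positivity)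
  refine ⟨⋃ j, N j, iUnion_subset fun j => (hNR j).trans fun _ hp => hp.1,
    countable_iUnion fun j => (hNfin j).countable, fun ε hε => ?_, fun p hp => ?_⟩
  · obtain ⟨J, hJ⟩ := pow_unbounded_of_one_lt (1 / ε) (one_lt_two : (1 : ℝ) < 2)
    refine ((finite_lt_nat J).biUnion fun j _ => hNfin j).subset ?_
    rintro a ⟨ha, hεa⟩
    obtain ⟨j, hj⟩ := mem_iUnion.1 ha
    have ha1 := (hNR j hj).2.2
    have hjJ : (2 : ℝ) ^ j < 2 ^ J := by
      rw [div_lt_iff₀ hε] at hJ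
      nlinarith [pow_pos (two_pos : (0 : ℝ) < 2) j]
    exact mem_biUnion ((pow_lt_pow_iff_right₀ one_lt_two).1 hjJ) hj
  · obtain ⟨hp1, hpn⟩ := hT p hp
    have hp1' : p.1 < 1 := by nlinarith [le_abs_self p.1, norm_fst_le p, Real.norm_eq_abs p.1]
    obtain ⟨j, hj, hj'⟩ := exists_nat_pow_near (one_le_one_div hp1 hp1'.le) one_lt_two
    rw [le_div_iff₀ hp1] at hj
    rw [div_lt_iff₀ hp1] at hj'
    obtain ⟨a, haN, hpa⟩ := mem_iUnion₂.1 (hNcov j ⟨hp, hj'.le, hj⟩)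
    refine ⟨a, mem_iUnion_of_mem j haN, (mem_ball.1 hpa).trans_le ?_⟩
    rw [div_le_div_iff₀ (by positivity) two_pos, pow_succ _ (j + 1)]
    linarith

theorem exists_countable_isHeightFinite_subset {S : Set (ℝ × V)} (hS : S ⊆ upperHalf V) :
    ∃ A ⊆ S, A.Countable ∧ IsHeightFinite A ∧ limitSet A = limitSet S ∧
      conicalLimitSet A = conicalLimitSet S := by
  -- truncating to an open neighbourhood of `{0} × V` makes every slab `ε ≤ t` bounded
  set U := {p : ℝ × V | ‖p‖ * p.1 < 1}
  have hU : IsOpen U := isOpen_lt (by fun_prop) continuous_const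
  have hU0 : ∀ x : V, ((0 : ℝ), x) ∈ U := by simp [U]
  obtain ⟨A, hAT, hAc, hAf, hnet⟩ :=
    exists_countable_isHeightFinite_net (T := S ∩ U) fun p hp => ⟨hS hp.1, hp.2⟩
  refine ⟨A, hAT.trans inter_subset_left, hAc, hAf, ?_, ?_⟩
  · rw [limitSet_eq_of_forall_exists_dist_lt hAT hnet, limitSet_inter_of_isOpen hU hU0]
  · rw [conicalLimitSet_eq_of_forall_exists_dist_lt hAT hnet,
      conicalLimitSet_inter_of_isOpen hU hU0]

end Discretization

section Construction

variable {V : Type*} [NormedAddCommGroup V]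

theorem conicalLimitSet_sep_exists_sq_le (E₀ : Set (ℝ × V)) :
    conicalLimitSet {p ∈ E₀ | ∃ x ∈ conicalLimitSet E₀, ‖p.2 - x‖ ^ 2 ≤ p.1} =
      conicalLimitSet E₀ := by
  refine (conicalLimitSet_mono (sep_subset _ _)).antisymm fun x hx => ?_
  obtain ⟨C, hC, hcl⟩ := mem_conicalLimitSet_iff.1 hx
  have hU : IsOpen {p : ℝ × V | C ^ 2 * p.1 < 1} := isOpen_lt (by fun_prop) continuous_const
  refine mem_conicalLimitSet_iff.2 ⟨C, hC, closure_mono ?_ (hU.inter_closure ⟨by simp, hcl⟩)⟩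
  rintro p ⟨hpU, hpE₀, hpK⟩
  have hpU : C ^ 2 * p.1 < 1 := hpU
  have hpK : ‖p.2 - x‖ ≤ C * p.1 := hpK
  have hp1 : 0 ≤ p.1 := nonneg_of_mul_nonneg_right ((norm_nonneg _).trans hpK) hC
  refine ⟨⟨hpE₀, x, hx, ?_⟩, hpK⟩
  nlinarith [norm_nonneg (p.2 - x)]

theorem limitSet_sep_exists_sq_le_subset_closure (S : Set (ℝ × V)) (E : Set V) :
    limitSet {p ∈ S | ∃ x ∈ E, ‖p.2 - x‖ ^ 2 ≤ p.1} ⊆ closure E := by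
  intro y hy
  rw [closure_eq_iInter_cthickening, mem_iInter₂]
  intro δ hδ
  have hU : IsOpen {p : ℝ × V | p.1 < δ ^ 2} := isOpen_lt continuous_fst continuous_const
  have hy' := hU.inter_closure ⟨show (0 : ℝ) < δ ^ 2 by positivity, hy⟩
  refine closure_minimal (t := Prod.snd ⁻¹' cthickening δ E) ?_
    (isClosed_cthickening.preimage continuous_snd) hy'
  rintro p ⟨hpU, -, x, hxE, hpx⟩
  have hpU : p.1 < δ ^ 2 := hpU
  refine mem_cthickening_of_dist_le _ x _ _ hxE ?_
  rw [dist_eq_norm]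
  nlinarith [norm_nonneg (p.2 - x)]

def sqInfDistGraph (F : Set V) : Set (ℝ × V) := {p | 0 < p.1 ∧ infDist p.2 F ^ 2 = p.1}

theorem limitSet_sqInfDistGraph_subset {F : Set V} (hF : IsClosed F) :
    limitSet (sqInfDistGraph F) ⊆ F := by
  intro x hx
  rcases F.eq_empty_or_nonempty with rfl | hne
  · have : sqInfDistGraph (∅ : Set V) = ∅ :=
      eq_empty_of_forall_notMem fun p hp => hp.1.ne' (by simpa using hp.2.symm)
    simp [this, limitSet] at hx
  have hcl : IsClosed {p : ℝ × V | infDist p.2 F ^ 2 = p.1} :=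
    isClosed_eq (by fun_prop) continuous_fst
  have h : infDist x F ^ 2 = 0 :=
    closure_minimal (fun p (hp : p ∈ sqInfDistGraph F) => hp.2) hcl (a := ((0 : ℝ), x)) hx
  exact (hF.mem_iff_infDist_zero hne).2 (pow_eq_zero_iff two_ne_zero |>.1 h)

theorem diff_interior_subset_limitSet_sqInfDistGraph {F : Set V} (hF : IsClosed F) :
    F \ interior F ⊆ limitSet (sqInfDistGraph F) := by
  rintro x ⟨hxF, hxi⟩
  have hx : x ∈ closure Fᶜ := by rwa [closure_compl]
  have hf : Continuous fun z : V => (infDist z F ^ 2, z) := by fun_prop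
  have := map_mem_closure (t := sqInfDistGraph F) hf hx fun z hz =>
    ⟨pow_pos ((hF.notMem_iff_infDist_pos ⟨x, hxF⟩).1 hz) 2, rfl⟩
  show ((0 : ℝ), x) ∈ closure (sqInfDistGraph F)
  simpa [infDist_zero_of_mem hxF] using this

theorem conicalLimitSet_sqInfDistGraph {F : Set V} (hF : IsClosed F) :
    conicalLimitSet (sqInfDistGraph F) = ∅ := by
  refine eq_empty_of_forall_notMem fun x hx => ?_
  have hxF := limitSet_sqInfDistGraph_subset hF (conicalLimitSet_subset_limitSet _ hx)
  obtain ⟨C, hC, hcl⟩ := mem_conicalLimitSet_iff.1 hx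
  have hcl' : IsClosed {p : ℝ × V | 1 ≤ C ^ 2 * p.1} := isClosed_le continuous_const (by fun_prop)
  have hsub : sqInfDistGraph F ∩ cone x C ⊆ {p | 1 ≤ C ^ 2 * p.1} := by
    rintro p ⟨⟨hp1, hpd⟩, hpK⟩
    have hpK : ‖p.2 - x‖ ≤ C * p.1 := hpK
    have hd : infDist p.2 F ≤ ‖p.2 - x‖ := dist_eq_norm p.2 x ▸ infDist_le_dist_of_mem hxF
    have hd0 : 0 < infDist p.2 F := by nlinarith [infDist_nonneg (x := p.2) (s := F)]
    show 1 ≤ C ^ 2 * p.1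
    nlinarith
  have h : 1 ≤ C ^ 2 * 0 := closure_minimal hsub hcl' hcl
  norm_num at h

variable [NormedSpace ℝ V] [Nontrivial V]

theorem exists_infinite_isHeightFinite_limitSet_eq_empty :
    ∃ P ⊆ upperHalf V, P.Countable ∧ P.Infinite ∧ IsHeightFinite P ∧ limitSet P = ∅ := by
  -- the points `(1 / (n + 1), (n + 1) • u)` stay on the closed set `t * ‖v‖ = ‖u‖`
  obtain ⟨u, hu⟩ := exists_ne (0 : V)
  set s : ℕ → ℝ × V := fun n => (1 / ((n : ℝ) + 1), ((n : ℝ) + 1) • u)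
  have hs : ∀ n, (s n).1 * ‖(s n).2‖ = ‖u‖ := fun n => by
    simp only [s, norm_smul]
    field_simp
    simp [abs_of_pos (by positivity : (0 : ℝ) < n + 1)]
  refine ⟨range s, range_subset_iff.2 fun n => show 0 < 1 / ((n : ℝ) + 1) by positivity,
    countable_range s,
    infinite_range_of_injective fun a b h => by simpa [s] using congrArg Prod.fst h,
    isHeightFinite_range tendsto_one_div_add_atTop_nhds_zero_nat, ?_⟩
  refine eq_empty_of_forall_notMem fun x hx => hu ?_
  have hcl : IsClosed {p : ℝ × V | p.1 * ‖p.2‖ = ‖u‖} := isClosed_eq (by fun_prop) continuous_const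
  have := closure_minimal (range_subset_iff.2 hs) hcl hx
  simpa [eq_comm] using this

end Construction

theorem exists_strictMono_tendsto_of_mem_closure_range {X : Type*} [TopologicalSpace X]
    [T1Space X] [FirstCountableTopology X] {u : ℕ → X} {a : X} (ha : a ∈ closure (range u))
    (hau : a ∉ range u) : ∃ φ : ℕ → ℕ, StrictMono φ ∧ Tendsto (u ∘ φ) atTop (𝓝 a) := by
  refine MapClusterPt.tendsto_subseq (mapClusterPt_atTop_iff_forall_mem_closure.2 fun N => ?_)
  rw [← image_univ, ← Iio_union_Ici (a := N), image_union, closure_union,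
    ((finite_Iio N).image u).isClosed.closure_eq] at ha
  exact ha.resolve_left fun h => hau (image_subset_range _ _ h)

section Sequences

variable {V : Type*} [NormedAddCommGroup V]

theorem exists_range_eq_tendsto_fst {A : Set (ℝ × V)} (hAH : A ⊆ upperHalf V)
    (hc : A.Countable) (hi : A.Infinite) (hf : IsHeightFinite A) :
    ∃ w : ℕ → ℝ × V, range w = A ∧ Tendsto (fun n => (w n).1) atTop (𝓝 0) := by
  have := hc.to_subtype
  have := hi.to_subtype
  obtain ⟨e⟩ : Nonempty (ℕ ≃ A) := inferInstance
  refine ⟨fun n => e n, (e.surjective.range_comp _).trans Subtype.range_coe,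
    tendsto_order.2 ⟨fun a ha => Eventually.of_forall fun n => ha.trans (hAH (e n).2),
      fun ε hε => ?_⟩⟩
  have hfin := (hf ε hε).preimage (Subtype.val_injective.comp e.injective).injOn
  filter_upwards [Nat.cofinite_eq_atTop ▸ hfin.eventually_cofinite_notMem] with n hn
  exact not_le.1 fun h => hn ⟨(e n).2, h⟩

theorem setOf_exists_strictMono_tendsto_eq_limitSet {w : ℕ → ℝ × V} (hpos : ∀ n, 0 < (w n).1)
    (ht : Tendsto (fun n => (w n).1) atTop (𝓝 0)) :
    {x | ∃ φ : ℕ → ℕ, StrictMono φ ∧ Tendsto (fun k => (w (φ k)).2) atTop (𝓝 x)} =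
      limitSet (range w) := by
  ext x
  refine ⟨fun ⟨φ, hφ, hx⟩ => mem_closure_of_tendsto ((ht.comp hφ.tendsto_atTop).prodMk_nhds hx)
    (Eventually.of_forall fun k => mem_range_self (φ k)), fun hx => ?_⟩
  obtain ⟨φ, hφ, hlim⟩ := exists_strictMono_tendsto_of_mem_closure_range hx
    fun ⟨n, hn⟩ => (hpos n).ne' (congrArg Prod.fst hn)
  exact ⟨φ, hφ, hlim.snd_nhds⟩

variable [CompleteSpace V]

theorem exists_mem_conicalLimitSet_dist_le {S : Set (ℝ × V)}
    (hS : ∀ p ∈ S, ∃ q ∈ S, q.1 ≤ p.1 / 2 ∧ dist q.2 p.2 ≤ p.1 / 2) {p : ℝ × V} (hp : p ∈ S) :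
    ∃ y ∈ conicalLimitSet S, dist p.2 y ≤ p.1 := by
  choose! g hgS hg₁ hg₂ using hS
  set q : ℕ → ℝ × V := fun k => g^[k] p
  have hsucc : ∀ k, q (k + 1) = g (q k) := fun k => Function.iterate_succ_apply' g k p
  have hmem : ∀ k, q k ∈ S := fun k => by
    induction k with
    | zero => exact hp
    | succ k ih => rw [hsucc]; exact hgS _ ih
  have hheight : ∀ k n, (q (n + k)).1 ≤ (q k).1 / 2 ^ n := fun k n => by
    induction n with
    | zero => simp
    | succ n ih =>
      rw [add_right_comm, hsucc, pow_succ, ← div_div]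
      exact (hg₁ _ (hmem _)).trans (by gcongr)
  have hstep : ∀ k n, dist (q (n + k)).2 (q (n + 1 + k)).2 ≤ (q k).1 / 2 / 2 ^ n := fun k n => by
    rw [add_right_comm, hsucc, dist_comm, div_right_comm]
    exact (hg₂ _ (hmem _)).trans (by gcongr; exact hheight k n)
  obtain ⟨y, hy⟩ := cauchySeq_tendsto_of_complete
    (cauchySeq_of_le_geometric_two (f := fun n => (q n).2) (C := (q 0).1) (by simpa using hstep 0))
  have hdist : ∀ k, dist (q k).2 y ≤ (q k).1 := fun k => by
    simpa using
      dist_le_of_le_geometric_two_of_tendsto₀ (hstep k) (hy.comp (tendsto_add_atTop_nat k))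
  have ht : Tendsto (fun k => (q k).1) atTop (𝓝 0) :=
    squeeze_zero (fun k => dist_nonneg.trans (hdist k)) (fun k => by simpa using hheight 0 k)
      (tendsto_const_nhds.div_atTop (tendsto_pow_atTop_atTop_of_one_lt one_lt_two))
  exact ⟨y, ⟨1, one_pos, q, hmem, ht, hy, fun k => by simpa [dist_eq_norm] using hdist k⟩, hdist 0⟩

theorem interior_limitSet_subset_closure_conicalLimitSet {A : Set (ℝ × V)}
    (hA : A ⊆ upperHalf V) : interior (limitSet A) ⊆ closure (conicalLimitSet A) := by
  intro x hx
  obtain ⟨ε, hε, hball⟩ := Metric.isOpen_iff.1 isOpen_interior x hx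
  refine Metric.mem_closure_iff.2 fun δ hδ => ?_
  set ρ := min δ ε
  have hρ : 0 < ρ := lt_min hδ hε
  set S := {p ∈ A | dist p.2 x + p.1 < ρ}
  have hstep : ∀ p ∈ S, ∃ q ∈ S, q.1 ≤ p.1 / 2 ∧ dist q.2 p.2 ≤ p.1 / 2 := by
    rintro p ⟨hpA, hp⟩
    have hp1 : 0 < p.1 := hA hpA
    have hpL : p.2 ∈ limitSet A :=
      interior_subset (hball (mem_ball.2 (by linarith [min_le_right δ ε])))
    obtain ⟨q, hqA, hq⟩ := Metric.mem_closure_iff.1 hpL (p.1 / 2) (half_pos hp1)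
    obtain ⟨hq1, hq2⟩ := fst_lt_and_dist_snd_lt hq
    rw [dist_comm] at hq2
    exact ⟨q, ⟨hqA, by linarith [dist_triangle q.2 p.2 x]⟩, hq1.le, hq2.le⟩
  have hxL : ((0 : ℝ), x) ∈ closure A := interior_subset (s := limitSet A) hx
  obtain ⟨p, hpA, hp⟩ := Metric.mem_closure_iff.1 hxL (ρ / 2) (half_pos hρ)
  obtain ⟨hp1, hp2⟩ := fst_lt_and_dist_snd_lt hp
  obtain ⟨y, hy, hpy⟩ := exists_mem_conicalLimitSet_dist_le hstep (p := p)
    ⟨hpA, by linarith [dist_comm x p.2]⟩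
  exact ⟨y, conicalLimitSet_mono (sep_subset _ _) hy,
    by linarith [dist_triangle x p.2 y, min_le_left δ ε]⟩

end Sequences

section Characterisation

variable {V : Type*} [NormedAddCommGroup V] [NormedSpace ℝ V] [ProperSpace V] [Nontrivial V]

theorem exists_limitSet_eq_conicalLimitSet_eq {E₀ : Set (ℝ × V)} {F : Set V}
    (hE₀ : E₀ ⊆ upperHalf V) (hF : IsClosed F) (hEF : conicalLimitSet E₀ ⊆ F)
    (hint : interior F ⊆ closure (conicalLimitSet E₀)) :
    ∃ A ⊆ upperHalf V, A.Countable ∧ A.Infinite ∧ IsHeightFinite A ∧ limitSet A = F ∧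
      conicalLimitSet A = conicalLimitSet E₀ := by
  set S := {p ∈ E₀ | ∃ x ∈ conicalLimitSet E₀, ‖p.2 - x‖ ^ 2 ≤ p.1}
  have hSH : S ⊆ upperHalf V := (sep_subset _ _).trans hE₀
  have hGH : sqInfDistGraph F ⊆ upperHalf V := fun p hp => hp.1
  have hΛS : conicalLimitSet S = conicalLimitSet E₀ := conicalLimitSet_sep_exists_sq_le E₀
  obtain ⟨A₁, hA₁S, hA₁c, hA₁f, hA₁L, hA₁Λ⟩ := exists_countable_isHeightFinite_subset hSH
  obtain ⟨A₂, hA₂G, hA₂c, hA₂f, hA₂L, hA₂Λ⟩ := exists_countable_isHeightFinite_subset hGH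
  obtain ⟨P, hPH, hPc, hPi, hPf, hPL⟩ := exists_infinite_isHeightFinite_limitSet_eq_empty (V := V)
  refine ⟨A₁ ∪ A₂ ∪ P, union_subset (union_subset (hA₁S.trans hSH) (hA₂G.trans hGH)) hPH,
    (hA₁c.union hA₂c).union hPc, hPi.mono subset_union_right, (hA₁f.union hA₂f).union hPf,
    ?_, ?_⟩
  · rw [limitSet_union, limitSet_union, hA₁L, hA₂L, hPL, union_empty]
    refine subset_antisymm (union_subset ((limitSet_sep_exists_sq_le_subset_closure _ _).trans
      (closure_minimal hEF hF)) (limitSet_sqInfDistGraph_subset hF)) fun x hxF => ?_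
    by_cases hxi : x ∈ interior F
    · exact Or.inl (closure_minimal (hΛS ▸ conicalLimitSet_subset_limitSet S)
        (isClosed_limitSet S) (hint hxi))
    · exact Or.inr (diff_interior_subset_limitSet_sqInfDistGraph hF ⟨hxF, hxi⟩)
  · have hΛP : conicalLimitSet P = ∅ :=
      subset_empty_iff.1 (hPL ▸ conicalLimitSet_subset_limitSet P)
    rw [conicalLimitSet_union, conicalLimitSet_union, hA₁Λ, hA₂Λ, hΛS,
      conicalLimitSet_sqInfDistGraph hF, hΛP, union_empty, union_empty]

end Characterisation

/-- `E` and `F` are respectively the conical limit set and the set of subsequential limits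
of a standard sequence in the upper half-space iff `E` is a conical limit set, `F` is
closed, `E ⊆ F`, and the interior of `F` is contained in the closure of `E`. -/
theorem conicalLimitSet_and_limitSet_characterisation (m : ℕ) (hm : 1 ≤ m)
    (E F : Set (EuclideanSpace ℝ (Fin m))) :
    (IsConicalLimitSet E ∧ IsClosed F ∧ E ⊆ F ∧ interior F ⊆ closure E) ↔
    (∃ w : ℕ → ℝ × EuclideanSpace ℝ (Fin m),
      (∀ n, 0 < (w n).1) ∧
      Tendsto (fun n => (w n).1) atTop (𝓝 (0 : ℝ)) ∧
      F = {x | ∃ φ : ℕ → ℕ, StrictMono φ ∧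
        Tendsto (fun k => (w (φ k)).2) atTop (𝓝 x)} ∧
      E = conicalLimitSet (Set.range w)) := by
  have : Nonempty (Fin m) := ⟨⟨0, hm⟩⟩
  constructor
  · rintro ⟨⟨E₀, hE₀, rfl⟩, hF, hEF, hint⟩
    obtain ⟨A, hAH, hAc, hAi, hAf, rfl, hAΛ⟩ :=
      exists_limitSet_eq_conicalLimitSet_eq hE₀ hF hEF hint
    obtain ⟨w, rfl, ht⟩ := exists_range_eq_tendsto_fst hAH hAc hAi hAf
    have hpos : ∀ n, 0 < (w n).1 := fun n => hAH (mem_range_self n)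
    exact ⟨w, hpos, ht, (setOf_exists_strictMono_tendsto_eq_limitSet hpos ht).symm, hAΛ.symm⟩
  · rintro ⟨w, hpos, ht, rfl, rfl⟩
    have hH : range w ⊆ upperHalf _ := range_subset_iff.2 hpos
    rw [setOf_exists_strictMono_tendsto_eq_limitSet hpos ht]
    exact ⟨⟨range w, hH, rfl⟩, isClosed_limitSet _, conicalLimitSet_subset_limitSet _,
      interior_limitSet_subset_closure_conicalLimitSet hH⟩
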